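/- Let β ≥ 1 and let X be distributed according to the symmetric beta distribution on [−1,1] with parameter β (density (1 − x²)^{β−1}/B(β) where B(β) = 2^{2β−1}·Γ(β)²/Γ(2β)). Then E|X| ≥ 1/(3·√β). -/

import Mathlib

open MeasureTheory ProbabilityTheory

noncomputable section

namespace Trace

/-- The `ℓ_p` norm on `Fin d → ℝ` (for a real exponent `p`). -/
def lpNorm {d : ℕ} (p : ℝ) (x : Fin d → ℝ) : ℝ :=
  (∑ i, |x i| ^ p) ^ (1 / p)

/-- The `ℓ_∞` norm on `Fin d → ℝ`. -/
def linftyNorm {d : ℕ} (x : Fin d → ℝ) : ℝ := ⨆ i, |x i|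

/-- A stochastic convex optimization (SCO) problem in dimension `d`:
a data space `Z`, a convex parameter domain `dom ⊆ ℝ^d` and a loss which is
convex in the parameter for every data point. -/
structure SCOProblem (d : ℕ) where
  Z : Type
  mZ : MeasurableSpace Z
  dom : Set (Fin d → ℝ)
  loss : Z → (Fin d → ℝ) → ℝ
  convex_dom : Convex ℝ dom
  convexOn_loss : ∀ z, ConvexOn ℝ dom (loss z)

attribute [instance] SCOProblem.mZ

/-- `ℓ_p`-Lipschitz-bounded SCO problems: the domain sits inside the unit `ℓ_p`
ball and the loss is `1`-Lipschitz w.r.t. the `ℓ_p` norm. -/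
def SCOProblem.IsLipschitzBounded {d : ℕ} (p : ℝ) (P : SCOProblem d) : Prop :=
  (∀ θ ∈ P.dom, lpNorm p θ ≤ 1) ∧
  ∀ z : P.Z, ∀ θ₁ ∈ P.dom, ∀ θ₂ ∈ P.dom,
    |P.loss z θ₁ - P.loss z θ₂| ≤ lpNorm p (θ₁ - θ₂)

/-- Population risk. -/
def SCOProblem.risk {d : ℕ} (P : SCOProblem d) (D : Measure P.Z) (θ : Fin d → ℝ) : ℝ :=
  ∫ z, P.loss z θ ∂D

/-- Joint law of `(S_n, θ̂)` where `S_n ∼ D^{⊗n}` and `θ̂ ∼ K(S_n)`. -/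
def jointMeasure {Z : Type*} [MeasurableSpace Z] {d n : ℕ}
    (D : Measure Z) (K : Kernel (Fin n → Z) (Fin d → ℝ)) :
    Measure ((Fin n → Z) × (Fin d → ℝ)) :=
  (Measure.pi fun _ : Fin n => D).bind fun s => (K s).map fun θ => (s, θ)

/-- `A_n` is an `α`-learner: it is a Markov kernel, it outputs points of the domain,
and for every data distribution its expected excess risk is at most `α`. -/
def IsAlphaLearner {d n : ℕ} (P : SCOProblem d)
    (K : Kernel (Fin n → P.Z) (Fin d → ℝ)) (α : ℝ) : Prop :=
  IsMarkovKernel K ∧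
  (∀ s, ∀ᵐ θ ∂(K s), θ ∈ P.dom) ∧
  ∀ D : Measure P.Z, IsProbabilityMeasure D →
    (∫ x, P.risk D x.2 ∂jointMeasure D K) - (⨅ θ : P.dom, P.risk D θ.1) ≤ α

/-- Joint law of `(Z_0, Z_1, …, Z_n, θ̂)` where the `Z_i` are i.i.d. from `D` and
`θ̂ ∼ K(Z_1, …, Z_n)` (coordinate `0` is the fresh point). -/
def traceMeasure {Z : Type*} [MeasurableSpace Z] {d n : ℕ}
    (D : Measure Z) (K : Kernel (Fin n → Z) (Fin d → ℝ)) :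
    Measure ((Fin (n + 1) → Z) × (Fin d → ℝ)) :=
  (Measure.pi fun _ : Fin (n + 1) => D).bind
    fun zs => (K fun i : Fin n => zs i.succ).map fun θ => (zs, θ)

/-- `(ξ, m)`-traceability of a learning algorithm `K`. -/
def IsTraceable {Z : Type*} [MeasurableSpace Z] {d n : ℕ}
    (K : Kernel (Fin n → Z) (Fin d → ℝ)) (ξ m : ℝ) : Prop :=
  ∃ (φ : (Fin d → ℝ) → Z → ℝ) (D : Measure Z) (lam : ℝ),
    IsProbabilityMeasure D ∧ Measurable (Function.uncurry φ) ∧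
    (traceMeasure D K {x | lam ≤ φ x.2 (x.1 0)}).toReal ≤ ξ ∧
    m ≤ ∫ x, ((Finset.univ.filter fun i : Fin n => lam ≤ φ x.2 (x.1 i.succ)).card : ℝ)
          ∂traceMeasure D K

/-- The subgaussian norm `‖X‖_{ψ₂}` of a real random variable. -/
def subgNorm {Ω : Type*} [MeasurableSpace Ω] (μ : Measure Ω) (X : Ω → ℝ) : ℝ :=
  sInf {t : ℝ | 0 < t ∧ ∫ ω, Real.exp (X ω ^ 2 / t ^ 2) ∂μ ≤ 2}

/-- Diameter of a set `T` with respect to a norm-like function `N`. -/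
def normDiam {d : ℕ} (N : (Fin d → ℝ) → ℝ) (T : Set (Fin d → ℝ)) : ℝ :=
  ⨆ x : T, ⨆ y : T, N (x.1 - y.1)

/-- A `σ`-subgaussian process indexed by `T` with respect to the norm `N`. -/
def IsSubgaussianProcess {Ω : Type*} [MeasurableSpace Ω] {d : ℕ} (μ : Measure Ω) (T : Set (Fin d → ℝ))
    (N : (Fin d → ℝ) → ℝ) (X : (Fin d → ℝ) → Ω → ℝ) (σ : ℝ) : Prop :=
  (∀ θ ∈ T, ∀ θ' ∈ T, subgNorm μ (fun ω => X θ ω - X θ' ω) ≤ σ * N (θ - θ')) ∧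
  ∀ θ ∈ T, subgNorm μ (X θ) ≤ σ * normDiam N T

/-- The Minkowski norm (gauge) of the convex hull of `T ∪ (−T)`. -/
def minkowskiNorm {d : ℕ} (T : Set (Fin d → ℝ)) : (Fin d → ℝ) → ℝ :=
  gauge (convexHull ℝ (T ∪ (fun x => -x) '' T))

/-- A subgaussian tracer at scale `κ` for domain `T`: the scores form a
`1`-subgaussian process w.r.t. the Minkowski norm of `T`, and are bounded by `κ`. -/
def IsSubgTracer {Z : Type*} [MeasurableSpace Z] {d : ℕ} (T : Set (Fin d → ℝ)) (κ : ℝ)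
    (φ : (Fin d → ℝ) → Z → ℝ) (D : Measure Z) : Prop :=
  IsProbabilityMeasure D ∧ Measurable (Function.uncurry φ) ∧
  IsSubgaussianProcess D T (minkowskiNorm T) φ 1 ∧
  ∀ θ ∈ T, ∀ z, |φ θ z| ≤ κ

/-- The subgaussian trace value `Tr_κ(P; n, α)`. -/
def traceValue {d : ℕ} (P : SCOProblem d) (κ : ℝ) (n : ℕ) (α : ℝ) : ℝ :=
  ⨅ K : {K : Kernel (Fin n → P.Z) (Fin d → ℝ) // IsAlphaLearner P K α},
    ⨆ t : {t : ((Fin d → ℝ) → P.Z → ℝ) × Measure P.Z // IsSubgTracer P.dom κ t.1 t.2},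
      ∫ x, (n : ℝ)⁻¹ * ∑ i, t.1.1 x.2 (x.1 i) ∂jointMeasure t.1.2 K.1

/-- `(ε, δ)`-differential privacy of a learning algorithm. -/
def IsDP {Z : Type*} [MeasurableSpace Z] {d n : ℕ}
    (K : Kernel (Fin n → Z) (Fin d → ℝ)) (ε δ : ℝ) : Prop :=
  ∀ s s' : Fin n → Z, (∃ j, ∀ i, i ≠ j → s i = s' i) →
    ∀ M : Set (Fin d → ℝ), MeasurableSet M →
      (K s M).toReal ≤ Real.exp ε * (K s' M).toReal + δ

/-- Support of a vector, as a finset of coordinates. -/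
def sparseSupport {d : ℕ} (z : Fin d → ℝ) : Finset (Fin d) :=
  Finset.univ.filter fun i => z i ≠ 0

/-- `Z_k`: sign vectors with exactly `k` nonzero coordinates. -/
def SparseZ (d k : ℕ) : Set (Fin d → ℝ) :=
  {z | (∀ i, z i = 0 ∨ z i = 1 ∨ z i = -1) ∧ (sparseSupport z).card = k}

lemma convex_linftyBall {d : ℕ} (r : ℝ) :
    Convex ℝ {θ : Fin d → ℝ | ∀ i, |θ i| ≤ r} := by
  intro x hx y hy a b ha hb hab
  intro i
  have h0 : (a • x + b • y) i = a * x i + b * y i := rfl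
  have h1 : |a * x i + b * y i| ≤ a * |x i| + b * |y i| := by
    calc |a * x i + b * y i| ≤ |a * x i| + |b * y i| := abs_add_le _ _
      _ = a * |x i| + b * |y i| := by
          rw [abs_mul, abs_mul, abs_of_nonneg ha, abs_of_nonneg hb]
  have h2 : a * |x i| + b * |y i| ≤ a * r + b * r := by
    have hx' := hx i
    have hy' := hy i
    gcongr
  have h3 : a * r + b * r = r := by rw [← add_mul, hab, one_mul]
  rw [h0]
  linarith

lemma convexOn_negInner {d : ℕ} {S : Set (Fin d → ℝ)} (hS : Convex ℝ S)
    (c : ℝ) (v : Fin d → ℝ) :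
    ConvexOn ℝ S fun θ => -(c * ∑ i, θ i * v i) := by
  refine ⟨hS, fun x _ y _ a b ha hb hab => le_of_eq ?_⟩
  have h : ∑ i, (a • x + b • y) i * v i
      = a * ∑ i, x i * v i + b * ∑ i, y i * v i := by
    rw [Finset.mul_sum, Finset.mul_sum, ← Finset.sum_add_distrib]
    refine Finset.sum_congr rfl fun i _ => ?_
    simp only [Pi.add_apply, Pi.smul_apply, smul_eq_mul]
    ring
  simp only [smul_eq_mul]
  rw [h]
  ring

/-- The hard problem `P_{k,p}`: `Θ` the `ℓ_∞` ball of radius `d^{-1/p}`, data space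
`Z_k`, and loss `f(θ, z) = -k^{1/p - 1}⟨θ, z⟩` (note `k^{-1/q} = k^{1/p-1}`). -/
def hardProblem (d k : ℕ) (p : ℝ) : SCOProblem d where
  Z := ↥(SparseZ d k)
  mZ := inferInstance
  dom := {θ | ∀ i, |θ i| ≤ (d : ℝ) ^ (-(1 : ℝ) / p)}
  loss := fun z θ => -((k : ℝ) ^ ((1 : ℝ) / p - 1) * ∑ i, θ i * z.1 i)
  convex_dom := convex_linftyBall _
  convexOn_loss := fun z => convexOn_negInner (convex_linftyBall _) _ _

/-- The sparse distribution `D_{μ,k}` on `Z_k` with mean `μ`. -/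
def sparseDist (d k : ℕ) (μ : Fin d → ℝ) : Measure ↥(SparseZ d k) :=
  Measure.sum fun z : ↥(SparseZ d k) =>
    (ENNReal.ofReal ((d.choose k : ℝ)⁻¹ *
        ∏ j ∈ sparseSupport z.1, (1 + (d : ℝ) / k * μ j * z.1 j) / 2)) •
      Measure.dirac z

/-- The fingerprinting score `φ_μ(θ, z) = ∑_{j ∈ supp z} θ^j (z^j − (d/k) μ^j)`. -/
def sparsePhi (d k : ℕ) (μ θ : Fin d → ℝ) (z : ↥(SparseZ d k)) : ℝ :=
  ∑ j ∈ sparseSupport z.1, θ j * (z.1 j - (d : ℝ) / k * μ j)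

/-- The `{±1}`-valued distribution with mean `m` (on `Bool`; `true ↦ 1`, `false ↦ -1`). -/
def signMeasure (m : ℝ) : Measure Bool :=
  ENNReal.ofReal ((1 + m) / 2) • Measure.dirac true +
    ENNReal.ofReal ((1 - m) / 2) • Measure.dirac false

/-- Embedding of boolean vectors as `{±1}`-vectors. -/
def signVec {n : ℕ} (z : Fin n → Bool) : Fin n → ℝ := fun i => if z i then 1 else -1

/-- Normalizing constant `B(β) = 2^{2β−1} Γ(β)² / Γ(2β)` of the symmetric beta
distribution. -/
def betaNormConst (β : ℝ) : ℝ :=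
  2 ^ (2 * β - 1) * Real.Gamma β ^ 2 / Real.Gamma (2 * β)

/-- The symmetric beta distribution on `[−γ, γ]` with parameter `β`, i.e. with
density `x ↦ (1 − (x/γ)²)^{β−1} / (γ B(β))` on `[−γ, γ]`. -/
def symmBeta (β γ : ℝ) : Measure ℝ :=
  (ENNReal.ofReal (γ * betaNormConst β))⁻¹ •
    ((volume.restrict (Set.Icc (-γ) γ)).withDensity fun x =>
      ENNReal.ofReal ((1 - (x / γ) ^ 2) ^ (β - 1)))

end Trace

/-! Since `x (1 - x²)^(β-1)` has antiderivative `-(1 - x²)^β / (2β)`, the first absolute moment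
is `1 / (β B(β))`. Legendre's duplication formula gives `B(β) = √π Γ(β) / Γ(β + 1/2)`, and
log-convexity of `Γ` at `β + 1/2, β + 1, β + 3/2` gives `(β Γ(β))² ≤ (β + 1/2) Γ(β + 1/2)²`.
Hence `(β B(β))² ≤ π (β + 1/2) ≤ 9β` once `β ≥ 1`. -/

namespace Trace

open Real Set

theorem betaNormConst_eq_sqrt_pi_mul_Gamma_div {β : ℝ} (hβ : 0 < β) :
    betaNormConst β = √π * Gamma β / Gamma (β + 1 / 2) := by
  have hdup := Gamma_mul_Gamma_add_half β
  have hpow : (2 : ℝ) ^ (2 * β - 1) * 2 ^ (1 - 2 * β) = 1 := by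
    rw [← rpow_add two_pos]; norm_num
  rw [betaNormConst, div_eq_div_iff (Gamma_pos_of_pos (by positivity)).ne'
    (Gamma_pos_of_pos (by positivity)).ne']
  linear_combination (2 ^ (2 * β - 1) * Gamma β) * hdup + (√π * Gamma β * Gamma (2 * β)) * hpow

theorem betaNormConst_pos {β : ℝ} (hβ : 0 < β) : 0 < betaNormConst β := by
  have := Gamma_pos_of_pos hβ
  have := Gamma_pos_of_pos (by positivity : 0 < β + 1 / 2)
  rw [betaNormConst_eq_sqrt_pi_mul_Gamma_div hβ]
  positivity

theorem sq_mul_Gamma_le_mul_sq_Gamma_add_half {β : ℝ} (hβ : 0 < β) :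
    (β * Gamma β) ^ 2 ≤ (β + 1 / 2) * Gamma (β + 1 / 2) ^ 2 := by
  have hconv := Gamma_mul_add_mul_le_rpow_Gamma_mul_rpow_Gamma (s := β + 1 / 2) (t := β + 3 / 2)
    (a := 1 / 2) (b := 1 / 2) (by positivity) (by positivity) (by norm_num) (by norm_num)
    (by norm_num)
  rw [show 1 / 2 * (β + 1 / 2) + 1 / 2 * (β + 3 / 2) = β + 1 by ring, Gamma_add_one hβ.ne',
    show β + 3 / 2 = β + 1 / 2 + 1 by ring, Gamma_add_one (by positivity),
    ← sqrt_eq_rpow, ← sqrt_eq_rpow, ← sqrt_mul (Gamma_pos_of_pos (by positivity)).le] at hconv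
  calc (β * Gamma β) ^ 2 ≤ √(Gamma (β + 1 / 2) * ((β + 1 / 2) * Gamma (β + 1 / 2))) ^ 2 := by
        gcongr
    _ = (β + 1 / 2) * Gamma (β + 1 / 2) ^ 2 := by
        rw [sq_sqrt (by have := Gamma_pos_of_pos (by positivity : 0 < β + 1 / 2); positivity)]
        ring

theorem sq_mul_betaNormConst_le {β : ℝ} (hβ : 0 < β) :
    (β * betaNormConst β) ^ 2 ≤ π * (β + 1 / 2) := by
  have hΓ := Gamma_pos_of_pos (by positivity : 0 < β + 1 / 2)
  rw [betaNormConst_eq_sqrt_pi_mul_Gamma_div hβ, mul_div_assoc', div_pow, mul_left_comm, mul_pow,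
    sq_sqrt pi_pos.le, div_le_iff₀ (by positivity), mul_assoc]
  exact mul_le_mul_of_nonneg_left (sq_mul_Gamma_le_mul_sq_Gamma_add_half hβ) pi_pos.le

theorem integral_symmBeta {β γ : ℝ} (hβ : 0 < β) (hγ : 0 ≤ γ) (f : ℝ → ℝ) :
    ∫ x, f x ∂symmBeta β γ =
      (γ * betaNormConst β)⁻¹ * ∫ x in Icc (-γ) γ, (1 - (x / γ) ^ 2) ^ (β - 1) * f x := by
  rw [symmBeta, integral_smul_measure, ENNReal.toReal_inv,
    ENNReal.toReal_ofReal (mul_nonneg hγ (betaNormConst_pos hβ).le), smul_eq_mul,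
    integral_withDensity_eq_integral_toReal_smul (by fun_prop) (by simp)]
  congr 1
  refine setIntegral_congr_fun measurableSet_Icc fun x hx => ?_
  have hx2 : (x / γ) ^ 2 ≤ 1 := by
    rw [div_pow]
    exact div_le_one_of_le₀ (sq_le_sq' hx.1 hx.2) (sq_nonneg γ)
  rw [ENNReal.toReal_ofReal (rpow_nonneg (by linarith) _), smul_eq_mul]

theorem integral_mul_one_sub_sq_rpow {β : ℝ} (hβ : 0 < β) :
    ∫ x in (0 : ℝ)..1, x * (1 - x ^ 2) ^ (β - 1) = 1 / (2 * β) := by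
  set F : ℝ → ℝ := fun x => -(1 - x ^ 2) ^ β / (2 * β)
  have hcont : Continuous F :=
    (((continuous_const.sub (continuous_pow 2)).rpow_const fun _ => Or.inr hβ.le).neg).div_const _
  have hderiv : ∀ x ∈ Ioo (0 : ℝ) 1, HasDerivAt F (x * (1 - x ^ 2) ^ (β - 1)) x := by
    intro x hx
    have hpos : 0 < 1 - x ^ 2 := by nlinarith [hx.1, hx.2]
    have h := (((hasDerivAt_pow 2 x).const_sub 1).rpow_const (p := β)
      (Or.inl hpos.ne')).neg.div_const (2 * β)
    refine h.congr_deriv ?_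
    field_simp
    ring
  have hint : IntervalIntegrable (fun x => x * (1 - x ^ 2) ^ (β - 1)) volume 0 1 :=
    intervalIntegral.intervalIntegrable_deriv_of_nonneg hcont.continuousOn
      (fun x hx => hderiv x (by simpa using hx))
      (fun x hx => by
        simp only [zero_le_one, min_eq_left, max_eq_right] at hx
        exact mul_nonneg hx.1.le (rpow_nonneg (by nlinarith [hx.1, hx.2]) _))
  rw [intervalIntegral.integral_eq_sub_of_hasDerivAt_of_le zero_le_one hcont.continuousOn
    hderiv hint]
  norm_num [F, zero_rpow hβ.ne']
  ring

theorem integral_abs_symmBeta_one {β : ℝ} (hβ : 0 < β) :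
    ∫ x, |x| ∂symmBeta β 1 = 1 / (β * betaNormConst β) := by
  set g : ℝ → ℝ := (Iic (1 : ℝ)).indicator fun t => t * (1 - t ^ 2) ^ (β - 1)
  have hmoment : ∫ x in Icc (-1 : ℝ) 1, (1 - (x / 1) ^ 2) ^ (β - 1) * |x| = 1 / β :=
    calc ∫ x in Icc (-1 : ℝ) 1, (1 - (x / 1) ^ 2) ^ (β - 1) * |x| = ∫ x, g |x| := by
          rw [← integral_indicator measurableSet_Icc]
          congr 1 with x
          simp [g, indicator, abs_le, sq_abs, mul_comm]
      _ = 2 * ∫ x in Ioi 0, g x := integral_comp_abs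
      _ = 2 * ∫ x in (0 : ℝ)..1, x * (1 - x ^ 2) ^ (β - 1) := by
          rw [setIntegral_indicator measurableSet_Iic, Ioi_inter_Iic,
            intervalIntegral.integral_of_le zero_le_one]
      _ = 1 / β := by
          rw [integral_mul_one_sub_sq_rpow hβ]
          field_simp
  rw [integral_symmBeta hβ zero_le_one, hmoment, one_mul]
  field_simp

end Trace

open MeasureTheory ProbabilityTheory in
/-- Lemma `lemma:beta-expected-absolute-value`: first absolute moment
of the symmetric beta distribution. -/
theorem symmBeta_abs_moment_lower_bound (β : ℝ) (hβ : 1 ≤ β) :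
    1 / (3 * Real.sqrt β) ≤ ∫ x, |x| ∂Trace.symmBeta β 1 := by
  have hβ0 : 0 < β := by linarith
  have hB := Trace.betaNormConst_pos hβ0
  rw [Trace.integral_abs_symmBeta_one hβ0]
  refine one_div_le_one_div_of_le (by positivity) <|
    (pow_le_pow_iff_left₀ (by positivity) (by positivity) two_ne_zero).1 ?_
  calc (β * Trace.betaNormConst β) ^ 2 ≤ Real.pi * (β + 1 / 2) :=
        Trace.sq_mul_betaNormConst_le hβ0
    _ ≤ 9 * β := by nlinarith [Real.pi_le_four]
    _ = (3 * Real.sqrt β) ^ 2 := by rw [mul_pow, Real.sq_sqrt hβ0.le]; norm_num
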